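/- arXiv:1612.09177 — 7 statements merged into one kernel-verified Lean document; each statement's English description precedes it below -/
import Mathlib

section
/- Let Q(x) be a monic polynomial of degree d+1 over a field of characteristic zero having d+1 distinct roots, and let r be an integer with 0 ≤ r < d. Then the sum over the roots α of Q of α^r / Q'(α) equals 0. -/
open Polynomial

/-- Let `Q(x)` be a monic polynomial of degree `d+1` over a field of characteristic zero
having `d+1` distinct roots, and let `r` be an integer with `0 ≤ r < d`.  Then the sum over
the roots `α` of `Q` of `α^r / Q'(α)` equals `0`. -/
theorem sum_pow_div_derivative_eval_eq_zero {K : Type*} [Field K] [CharZero K] [DecidableEq K]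
    (d r : ℕ) (Q : K[X]) (hQ : Q.Monic) (hdeg : Q.natDegree = d + 1)
    (hroots : Q.roots.toFinset.card = d + 1) (hr : r < d) :
    ∑ α ∈ Q.roots.toFinset, α ^ r / (Polynomial.derivative Q).eval α = 0 := by
  classical
  set s := Q.roots.toFinset with hs
  have hinj : Set.InjOn (id : K → K) s := fun a _ b _ h => h
  have hcard : s.card = d + 1 := hroots
  have hrootscard : Q.roots.card = d + 1 :=
    le_antisymm (hdeg ▸ Q.card_roots') (hroots ▸ Multiset.toFinset_card_le _)
  have hval : Q.roots = s.val := by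
    refine (Multiset.eq_of_le_of_card_le (Multiset.dedup_le _) ?_).symm
    have : s.val.card = d + 1 := hroots
    rw [hrootscard]
    exact le_of_eq this.symm
  have hQnodal : Q = Lagrange.nodal s id := by
    have hprod := prod_multiset_X_sub_C_of_monic_of_roots_card_eq hQ (by rw [hrootscard, hdeg])
    rw [Lagrange.nodal_eq, ← hprod, hval, Finset.prod_eq_multiset_prod]
    rfl
  have hb : ∀ α ∈ s, (Lagrange.basis s id α).coeff d = Lagrange.nodalWeight s id α := by
    intro α hα
    rw [Lagrange.basis_eq_prod_sub_inv_mul_nodal_div hα, ← Lagrange.nodal_erase_eq_nodal_div hα,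
      coeff_C_mul]
    have hmon : (Lagrange.nodal (s.erase α) id).Monic := Lagrange.nodal_monic
    have hdeg' : (Lagrange.nodal (s.erase α) id).natDegree = d := by
      rw [Lagrange.natDegree_nodal, Finset.card_erase_of_mem hα, hcard]
      rfl
    rw [← hdeg', hmon.coeff_natDegree, mul_one]
  have key : ∑ α ∈ s, α ^ r * Lagrange.nodalWeight s id α = 0 := by
    have hX := Lagrange.eq_interpolate (f := (X : K[X]) ^ r) hinj
      (by rw [degree_X_pow, hcard]; exact_mod_cast Nat.lt_succ_of_lt hr)
    have h0 := congrArg (fun p => p.coeff d) hX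
    simp only [Lagrange.interpolate_apply, finset_sum_coeff, coeff_C_mul, coeff_X_pow,
      eval_pow, eval_X, id_eq] at h0
    rw [if_neg (Nat.ne_of_gt hr)] at h0
    rw [h0]
    exact Finset.sum_congr rfl fun α hα => by rw [hb α hα]
  calc ∑ α ∈ s, α ^ r / (Polynomial.derivative Q).eval α
      = ∑ α ∈ s, α ^ r * Lagrange.nodalWeight s id α := by
        refine Finset.sum_congr rfl fun α hα => ?_
        rw [div_eq_mul_inv, Lagrange.nodalWeight_eq_eval_derivative_nodal hα, hQnodal, id_eq]
    _ = 0 := key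
end

section
/- Let Q(x) be a monic polynomial of degree d+1 over a field of characteristic zero having d+1 distinct roots. Then the sum over the roots α of Q of α^d / Q'(α) equals 1. -/
/-!
A monic polynomial with simple roots is the nodal polynomial of its roots, so
`Q'(α) = ∏_{β ≠ α} (α - β)`. The sum is then the Lagrange formula for the coefficient of `X^d` in
the interpolant of `X^d` on the `d + 1` roots, and that interpolant is `X^d` itself.
-/

open Polynomial Finset

theorem Polynomial.Monic.eq_nodal_roots_toFinset {R : Type*} [CommRing R] [IsDomain R]
    [DecidableEq R] {Q : R[X]} (hQ : Q.Monic) (hcard : #Q.roots.toFinset = Q.natDegree) :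
    Q = Lagrange.nodal Q.roots.toFinset id := by
  have hroots_card : Multiset.card Q.roots = Q.natDegree :=
    le_antisymm Q.card_roots' (hcard ▸ Multiset.toFinset_card_le _)
  have hnodup : Q.roots.Nodup :=
    Multiset.toFinset_card_eq_card_iff_nodup.mp (hcard.trans hroots_card.symm)
  conv_lhs => rw [← prod_multiset_X_sub_C_of_monic_of_roots_card_eq hQ hroots_card]
  rw [Lagrange.nodal_eq, Finset.prod_eq_multiset_prod, Multiset.toFinset_val,
    hnodup.dedup]
  rfl

theorem Lagrange.sum_eval_div_eval_derivative_nodal {F ι : Type*} [Field F] [DecidableEq ι]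
    {s : Finset ι} {v : ι → F} (hvs : Set.InjOn v s) {P : F[X]} (hP : P.degree < #s) :
    ∑ i ∈ s, P.eval (v i) / (derivative (nodal s v)).eval (v i) = P.coeff (#s - 1) := by
  rw [coeff_eq_sum hvs hP]
  refine sum_congr rfl fun i hi => ?_
  rw [eval_nodal_derivative_eval_node_eq hi, eval_nodal]

theorem sum_pow_div_derivative_eval_eq_one_general {K : Type*} [Field K] [DecidableEq K]
    (d : ℕ) (Q : K[X]) (hQ : Q.Monic) (hdeg : Q.natDegree = d + 1)
    (hroots : Q.roots.toFinset.card = d + 1) :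
    ∑ α ∈ Q.roots.toFinset, α ^ d / (Polynomial.derivative Q).eval α = 1 := by
  have hQ_nodal := hQ.eq_nodal_roots_toFinset (hroots.trans hdeg.symm)
  have hdeg_lt : (X ^ d : K[X]).degree < #Q.roots.toFinset := by
    rw [degree_X_pow, hroots]; exact_mod_cast d.lt_succ_self
  calc ∑ α ∈ Q.roots.toFinset, α ^ d / (derivative Q).eval α
      = ∑ α ∈ Q.roots.toFinset, (X ^ d : K[X]).eval (id α) /
          (derivative (Lagrange.nodal Q.roots.toFinset id)).eval (id α) := by
        rw [← hQ_nodal]; simp only [eval_X_pow, id]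
    _ = (X ^ d : K[X]).coeff (#Q.roots.toFinset - 1) :=
        Lagrange.sum_eval_div_eval_derivative_nodal Function.injective_id.injOn hdeg_lt
    _ = 1 := by rw [hroots, add_tsub_cancel_right, coeff_X_pow_self]

/-- Let `Q(x)` be a monic polynomial of degree `d+1` over a field of characteristic zero
having `d+1` distinct roots.  Then the sum over the roots `α` of `Q` of `α^d / Q'(α)`
equals `1`. -/
theorem sum_pow_div_derivative_eval_eq_one {K : Type*} [Field K] [CharZero K] [DecidableEq K]
    (d : ℕ) (Q : K[X]) (hQ : Q.Monic) (hdeg : Q.natDegree = d + 1)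
    (hroots : Q.roots.toFinset.card = d + 1) :
    ∑ α ∈ Q.roots.toFinset, α ^ d / (Polynomial.derivative Q).eval α = 1 :=
  sum_pow_div_derivative_eval_eq_one_general d Q hQ hdeg hroots
end

section
/- Let F(x_1,…,x_n) be a polynomial in n variables over a field of characteristic zero of total degree at most d_1 + ⋯ + d_n, and let Q_1(x),…,Q_n(x) be monic polynomials of degrees d_1+1,…,d_n+1 respectively, each having distinct roots. Then the sum, over all n-tuples (α_1,…,α_n) with Q_i(α_i) = 0 for each i, of F(α_1,…,α_n) / (Q_1'(α_1)⋯Q_n'(α_n)) is independent of the choice of the Q_i and equals the coefficient of the monomial x_1^{d_1}⋯x_n^{d_n} in F(x_1,…,x_n). -/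
/-!
Expanding `F` into monomials turns the sum over root tuples into a product of one-variable sums
`∑_{Q(α)=0} α^k / Q'(α)`. For `Q` monic with simple roots, `Q'(α) = ∏_{β ≠ α} (α - β)`, so such a sum
is the Lagrange-interpolation formula for the coefficient of `X^(deg Q - 1)` in `X^k`; it is `1` for
`k = deg Q - 1` and `0` for smaller `k`. The bound on the total degree of `F` forces every monomial
other than `x^d` to have some exponent `m_j < d_j`, so only the coefficient of `x^d` survives.
-/

open Finset Polynomial

theorem Lagrange.sum_pow_div_prod_sub_eq_ite {K : Type*} [Field K] [DecidableEq K]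
    (s : Finset K) {k : ℕ} (hk : k < #s) :
    ∑ x ∈ s, x ^ k / ∏ y ∈ s.erase x, (x - y) = if k + 1 = #s then 1 else 0 := by
  have hdeg : ((X : K[X]) ^ k).degree < #s := by
    rw [degree_X_pow]; exact_mod_cast hk
  have h := Lagrange.coeff_eq_sum (v := id) (Set.injOn_id _) hdeg
  simp only [eval_pow, eval_X, id_eq, coeff_X_pow] at h
  rw [← h]
  exact if_congr (by omega) rfl rfl

theorem Polynomial.eval_derivative_eq_prod_erase_sub {K : Type*} [Field K] [DecidableEq K]
    {Q : K[X]} (hQ : Q.Monic) (hroots : #Q.roots.toFinset = Q.natDegree) {x : K}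
    (hx : x ∈ Q.roots) :
    Q.derivative.eval x = ∏ y ∈ Q.roots.toFinset.erase x, (x - y) := by
  have hcard : Q.roots.card = Q.natDegree :=
    le_antisymm (card_roots' Q) (hroots ▸ Multiset.toFinset_card_le _)
  have hnodup : Q.roots.Nodup :=
    Multiset.toFinset_card_eq_card_iff_nodup.mp (hroots.trans hcard.symm)
  rw [(splits_iff_card_roots.mpr hcard).eval_root_derivative hQ hx, Finset.prod_eq_multiset_prod,
    Finset.erase_val, Multiset.toFinset_val, hnodup.dedup]

theorem Polynomial.sum_roots_pow_div_eval_derivative {K : Type*} [Field K] [DecidableEq K]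
    {Q : K[X]} (hQ : Q.Monic) (hroots : #Q.roots.toFinset = Q.natDegree) {k : ℕ}
    (hk : k < Q.natDegree) :
    ∑ x ∈ Q.roots.toFinset, x ^ k / Q.derivative.eval x = if k + 1 = Q.natDegree then 1 else 0 := by
  rw [← hroots, ← Lagrange.sum_pow_div_prod_sub_eq_ite _ (hroots ▸ hk)]
  refine sum_congr rfl fun x hx => ?_
  rw [eval_derivative_eq_prod_erase_sub hQ hroots (Multiset.mem_toFinset.mp hx)]

theorem MvPolynomial.sum_piFinset_eval_mul_prod {σ R : Type*} [Fintype σ] [DecidableEq σ]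
    [CommSemiring R] (F : MvPolynomial σ R) (S : σ → Finset R) (w : σ → R → R) :
    ∑ α ∈ Fintype.piFinset S, eval α F * ∏ i, w i (α i)
      = ∑ m ∈ F.support, coeff m F * ∏ i, ∑ x ∈ S i, x ^ m i * w i x := by
  simp_rw [eval_eq', sum_mul]
  rw [sum_comm]
  refine sum_congr rfl fun m _ => ?_
  rw [prod_univ_sum, mul_sum]
  refine sum_congr rfl fun α _ => ?_
  rw [mul_assoc, ← prod_mul_distrib]

theorem Fintype.exists_lt_of_sum_le_of_ne {ι : Type*} [Fintype ι] {m d : ι → ℕ}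
    (hsum : ∑ i, m i ≤ ∑ i, d i) (hne : m ≠ d) : ∃ j, m j < d j := by
  by_contra! hle
  obtain ⟨j, hj⟩ := Function.ne_iff.mp hne
  exact (sum_lt_sum (fun i _ => hle i) ⟨j, mem_univ j, (hle j).lt_of_ne' hj⟩).not_ge hsum

theorem sum_eval_div_prod_derivative_eq_coeff_general {K : Type*} [Field K] [DecidableEq K]
    (n : ℕ) (d : Fin n → ℕ) (F : MvPolynomial (Fin n) K)
    (hF : F.totalDegree ≤ ∑ i, d i)
    (Q : Fin n → Polynomial K)
    (hQ : ∀ i, (Q i).Monic)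
    (hdeg : ∀ i, (Q i).natDegree = d i + 1)
    (hroots : ∀ i, (Q i).roots.toFinset.card = d i + 1) :
    ∑ α ∈ Fintype.piFinset (fun i => (Q i).roots.toFinset),
        MvPolynomial.eval α F / ∏ i, (Polynomial.derivative (Q i)).eval (α i)
      = MvPolynomial.coeff (Finsupp.equivFunOnFinite.symm d) F := by
  have hsum (k : ℕ) (i : Fin n) (hk : k ≤ d i) :
      ∑ x ∈ (Q i).roots.toFinset, x ^ k * ((Q i).derivative.eval x)⁻¹
        = if k = d i then 1 else 0 := by
    have hk' : k < (Q i).natDegree := by rw [hdeg i]; omega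
    simp only [← div_eq_mul_inv]
    rw [sum_roots_pow_div_eval_derivative (hQ i) ((hroots i).trans (hdeg i).symm) hk', hdeg i]
    exact if_congr (by omega) rfl rfl
  simp only [div_eq_mul_inv, ← prod_inv_distrib]
  rw [MvPolynomial.sum_piFinset_eval_mul_prod F _ fun i x => ((Q i).derivative.eval x)⁻¹,
    sum_eq_single (Finsupp.equivFunOnFinite.symm d), Finsupp.coe_equivFunOnFinite_symm,
    prod_eq_one fun i _ => (hsum _ i le_rfl).trans (if_pos rfl), mul_one]
  · intro m hm hne
    obtain ⟨j, hj⟩ := Fintype.exists_lt_of_sum_le_of_ne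
      (((Finsupp.degree_eq_sum m).symm.trans_le (MvPolynomial.le_totalDegree hm)).trans hF)
      (fun h => hne (Finsupp.equivFunOnFinite.injective h))
    rw [prod_eq_zero (mem_univ j) ((hsum _ j hj.le).trans (if_neg hj.ne)), mul_zero]
  · intro hD
    rw [MvPolynomial.notMem_support_iff.mp hD, zero_mul]

/-- Let `F(x_1,…,x_n)` be a polynomial in `n` variables over a field of characteristic zero
of total degree at most `d_1 + ⋯ + d_n`, and let `Q_1,…,Q_n` be monic polynomials of degrees
`d_1+1,…,d_n+1` respectively, each having distinct roots.  Then the sum, over all `n`-tuples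
`(α_1,…,α_n)` with `Q_i(α_i) = 0` for each `i`, of `F(α_1,…,α_n) / (Q_1'(α_1)⋯Q_n'(α_n))`
equals the coefficient of `x_1^{d_1}⋯x_n^{d_n}` in `F`, independently of the `Q_i`. -/
theorem sum_eval_div_prod_derivative_eq_coeff {K : Type*} [Field K] [CharZero K] [DecidableEq K]
    (n : ℕ) (d : Fin n → ℕ) (F : MvPolynomial (Fin n) K)
    (hF : F.totalDegree ≤ ∑ i, d i)
    (Q : Fin n → Polynomial K)
    (hQ : ∀ i, (Q i).Monic)
    (hdeg : ∀ i, (Q i).natDegree = d i + 1)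
    (hroots : ∀ i, (Q i).roots.toFinset.card = d i + 1) :
    ∑ α ∈ Fintype.piFinset (fun i => (Q i).roots.toFinset),
        MvPolynomial.eval α F / ∏ i, (Polynomial.derivative (Q i)).eval (α i)
      = MvPolynomial.coeff (Finsupp.equivFunOnFinite.symm d) F :=
  sum_eval_div_prod_derivative_eq_coeff_general n d F hF Q hQ hdeg hroots
end

section
/- Let P(x_1,…,x_n) be a symmetric polynomial in n variables over a field of characteristic zero whose total degree is strictly less than n(n+1)/2. Then Σ_{I ⊆ {1,…,n}} P(λ_I) / ( ∏_{i<j} (λ_{i,I} + λ_{j,I}) · ∏_{i=1}^n λ_{i,I} ) = 0. -/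
/-!
Multiplying the `I`-th term above and below by `V(λ_I) ∏ λ_{i,I}`, where `V = ∏_{i<j} (x_j - x_i)`,
makes the denominator `∏_{i<j} (λ_j² - λ_i²) ∏ λ_i²`, independent of `I`, and the numerator
`G(λ_I)` with `G = P · V · x_1 ⋯ x_n`. Summed over all sign patterns, a monomial vanishes as soon
as one of its exponents is odd. Since `G` is antisymmetric and divisible by every variable, the
exponents of each of its monomials are distinct and positive; were they all even, their sum would
be at least `2 (1 + ⋯ + n) = n (n + 1)`, more than `deg G < n(n+1)/2 + n(n-1)/2 + n`.
-/

open Finset MvPolynomial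

section Combinatorics

lemma Nat.choose_two_succ (n : ℕ) : (n + 1).choose 2 = n.choose 2 + n := by
  rw [Nat.choose_two_right, Nat.choose_two_right, Nat.triangle_succ]

lemma choose_two_le_sum_of_zero_notMem (s : Finset ℕ) (hs : 0 ∉ s) :
    (#s + 1).choose 2 ≤ ∑ x ∈ s, x := by
  induction s using Finset.induction_on_max with
  | empty => simp
  | insert a s hlt ih =>
    have ha : a ∉ s := fun h => (hlt a h).false
    have hsub : s ⊆ Ioo 0 a := fun x hx =>
      mem_Ioo.2 ⟨Nat.pos_of_ne_zero fun h => hs (h ▸ mem_insert_of_mem hx), hlt x hx⟩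
    have hcard : #s ≤ a - 1 := by simpa using card_le_card hsub
    have ha0 : a ≠ 0 := fun h => hs (h ▸ mem_insert_self a s)
    rw [card_insert_of_notMem ha, sum_insert ha, Nat.choose_two_succ]
    have := ih fun h => hs (mem_insert_of_mem h)
    omega

lemma choose_two_le_sum_of_injective {ι : Type*} [Fintype ι] {f : ι → ℕ}
    (hf : Function.Injective f) (h0 : ∀ i, f i ≠ 0) :
    (Fintype.card ι + 1).choose 2 ≤ ∑ i, f i := by
  classical
  have := choose_two_le_sum_of_zero_notMem (univ.image f) (by simpa using h0)
  rwa [card_image_of_injective _ hf, card_univ, sum_image fun _ _ _ _ h => hf h] at this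

end Combinatorics

section SignPatterns

variable {σ R : Type*} [Fintype σ] [DecidableEq σ] [CommRing R]

lemma sum_prod_ite_neg_pow (x : σ → R) (d : σ → ℕ) :
    ∑ I : Finset σ, ∏ i, (if i ∈ I then x i else -x i) ^ d i
      = ∏ i, (x i ^ d i + (-x i) ^ d i) := by
  rw [prod_add, powerset_univ]
  refine sum_congr rfl fun I _ => ?_
  simp [prod_ite, filter_notMem_eq_sdiff]

lemma sum_eval_ite_neg_eq_zero (x : σ → R) {p : MvPolynomial σ R}
    (hodd : ∀ d ∈ p.support, ∃ k, Odd (d k)) :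
    ∑ I : Finset σ, eval (fun i => if i ∈ I then x i else -x i) p = 0 := by
  simp_rw [eval_eq', sum_comm (γ := Finset σ), ← mul_sum, sum_prod_ite_neg_pow]
  refine sum_eq_zero fun d hd => ?_
  obtain ⟨k, hk⟩ := hodd d hd
  rw [prod_eq_zero (mem_univ k) (by rw [hk.neg_pow, add_neg_cancel]), mul_zero]

end SignPatterns

section Antisymmetric

variable {σ R : Type*} [DecidableEq σ] [CommRing R]

lemma coeff_eq_zero_of_rename_swap_eq_neg [NoZeroDivisors R] [CharZero R]
    {p : MvPolynomial σ R} {i j : σ} (hp : rename (Equiv.swap i j) p = -p)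
    {d : σ →₀ ℕ} (hd : d i = d j) : coeff d p = 0 := by
  have hfix : d.mapDomain (Equiv.swap i j) = d := by
    ext k
    rw [Finsupp.mapDomain_equiv_apply, Equiv.symm_swap, Equiv.apply_swap_eq_self hd]
  have := coeff_rename_mapDomain _ (Equiv.swap i j).injective p d
  rwa [hfix, hp, coeff_neg, CharZero.neg_eq_self_iff] at this

lemma ne_zero_of_mem_support_mul_prod_X [Fintype σ] (q : MvPolynomial σ R) {d : σ →₀ ℕ}
    (hd : d ∈ (q * ∏ i, X i).support) (k : σ) : d k ≠ 0 := by
  intro hk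
  rw [← mul_prod_erase _ _ (mem_univ k), mul_left_comm, mul_comm, mem_support_iff,
    coeff_mul_X'] at hd
  simp [hk] at hd

lemma exists_odd_of_mem_support [Fintype σ] [NoZeroDivisors R] [CharZero R]
    {p : MvPolynomial σ R}
    (hanti : ∀ i j, i ≠ j → rename (Equiv.swap i j) p = -p)
    (hpos : ∀ d ∈ p.support, ∀ k, d k ≠ 0)
    (hdeg : p.totalDegree < 2 * (Fintype.card σ + 1).choose 2) :
    ∀ d ∈ p.support, ∃ k, Odd (d k) := by
  intro d hd
  by_contra! heven
  simp only [Nat.not_odd_iff_even] at heven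
  have hinj : Function.Injective (fun k => d k / 2) := by
    intro a b hab
    by_contra hne
    refine mem_support_iff.1 hd (coeff_eq_zero_of_rename_swap_eq_neg (hanti a b hne) ?_)
    rw [← Nat.two_mul_div_two_of_even (heven a), ← Nat.two_mul_div_two_of_even (heven b)]
    exact congrArg (2 * ·) hab
  have hhalf := choose_two_le_sum_of_injective hinj fun k h =>
    hpos d hd k (by have := Nat.two_mul_div_two_of_even (heven k); omega)
  have hsum : ∑ k, d k = 2 * ∑ k, d k / 2 := by
    rw [mul_sum]; exact sum_congr rfl fun k _ => (Nat.two_mul_div_two_of_even (heven k)).symm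
  have := le_totalDegree hd
  rw [Finsupp.sum_fintype _ _ fun _ => rfl] at this
  omega

end Antisymmetric

section Vandermonde

variable {n : ℕ} {R : Type*} [CommRing R]

lemma Fin.sum_card_Ioi : ∑ i : Fin n, #(Ioi i) = n.choose 2 := by
  simp_rw [Fin.card_Ioi]
  rw [Fin.sum_univ_eq_sum_range (fun k => n - 1 - k), sum_range_reflect (fun k => k),
    sum_range_id, Nat.choose_two_right]

lemma prod_Ioi_sub_comp_swap (v : Fin n → R) {i j : Fin n} (hij : i ≠ j) :
    ∏ a, ∏ b ∈ Ioi a, (v (Equiv.swap i j b) - v (Equiv.swap i j a))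
      = -∏ a, ∏ b ∈ Ioi a, (v b - v a) := by
  have hperm : Matrix.vandermonde (v ∘ Equiv.swap i j) =
      (Matrix.vandermonde v).submatrix (Equiv.swap i j) id := by
    ext a b
    simp [Matrix.vandermonde_apply]
  have := Matrix.det_permute (Equiv.swap i j) (Matrix.vandermonde v)
  rwa [← hperm, Matrix.det_vandermonde, Matrix.det_vandermonde, Equiv.Perm.sign_swap hij,
    Units.val_neg, Units.val_one, Int.cast_neg, Int.cast_one, neg_one_mul] at this

variable (n R) in
noncomputable def vandermondePoly : MvPolynomial (Fin n) R := ∏ i, ∏ j ∈ Ioi i, (X j - X i)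

lemma eval_vandermondePoly (v : Fin n → R) :
    eval v (vandermondePoly n R) = ∏ i, ∏ j ∈ Ioi i, (v j - v i) := by
  simp [vandermondePoly]

lemma rename_swap_vandermondePoly {i j : Fin n} (hij : i ≠ j) :
    rename (Equiv.swap i j) (vandermondePoly n R) = -vandermondePoly n R := by
  simp only [vandermondePoly, map_prod, map_sub, rename_X]
  exact prod_Ioi_sub_comp_swap X hij

lemma isHomogeneous_vandermondePoly : (vandermondePoly n R).IsHomogeneous (n.choose 2) := by
  rw [← Fin.sum_card_Ioi]
  refine IsHomogeneous.prod _ _ _ fun i _ => ?_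
  rw [card_eq_sum_ones]
  exact IsHomogeneous.prod _ _ _ fun j _ => (isHomogeneous_X R j).sub (isHomogeneous_X R i)

lemma totalDegree_mul_vandermondePoly_mul_prod_X_le (P : MvPolynomial (Fin n) R) :
    (P * vandermondePoly n R * ∏ i, X i).totalDegree ≤ P.totalDegree + (n + 1).choose 2 := by
  have hE : (∏ i : Fin n, (X i : MvPolynomial (Fin n) R)).totalDegree ≤ n := by
    simpa using (IsHomogeneous.prod (univ : Finset (Fin n)) _ _
      fun i _ => isHomogeneous_X R i).totalDegree_le
  calc (P * vandermondePoly n R * ∏ i, X i).totalDegree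
      ≤ P.totalDegree + (vandermondePoly n R).totalDegree
          + (∏ i : Fin n, (X i : MvPolynomial (Fin n) R)).totalDegree :=
        (totalDegree_mul _ _).trans (add_le_add_left (totalDegree_mul _ _) _)
    _ ≤ P.totalDegree + n.choose 2 + n := by
        gcongr
        exact isHomogeneous_vandermondePoly.totalDegree_le
    _ = P.totalDegree + (n + 1).choose 2 := by rw [Nat.choose_two_succ, add_assoc]

lemma rename_swap_mul_vandermondePoly_mul_prod_X {P : MvPolynomial (Fin n) R}
    (hP : P.IsSymmetric) {i j : Fin n} (hij : i ≠ j) :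
    rename (Equiv.swap i j) (P * vandermondePoly n R * ∏ k, X k)
      = -(P * vandermondePoly n R * ∏ k, X k) := by
  have hE : rename (Equiv.swap i j) (∏ k : Fin n, (X k : MvPolynomial (Fin n) R))
      = ∏ k, X k := by
    simpa only [map_prod, rename_X] using Equiv.prod_comp (Equiv.swap i j) X
  rw [map_mul, map_mul, hP, rename_swap_vandermondePoly hij, hE, mul_neg, neg_mul]

end Vandermonde

lemma eval_div_eq_eval_mul_vandermondePoly_mul_prod_X_div {K : Type*} [Field K] {n : ℕ}
    (P : MvPolynomial (Fin n) K) {lam v : Fin n → K} (h0 : ∀ i, lam i ≠ 0)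
    (hsq : ∀ i j, i ≠ j → lam i ^ 2 ≠ lam j ^ 2) (hv : ∀ i, v i ^ 2 = lam i ^ 2) :
    eval v P / ((∏ i, ∏ j ∈ Ioi i, (v i + v j)) * ∏ i, v i)
      = eval v (P * vandermondePoly n K * ∏ i, X i)
          / ((∏ i, ∏ j ∈ Ioi i, (lam j ^ 2 - lam i ^ 2)) * ∏ i, lam i ^ 2) := by
  have hV : ∏ i, ∏ j ∈ Ioi i, (v j - v i) ≠ 0 :=
    prod_ne_zero_iff.2 fun i _ => prod_ne_zero_iff.2 fun j hj => sub_ne_zero.2 fun h =>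
      hsq i j (mem_Ioi.1 hj).ne (by rw [← hv, ← hv, h])
  have hB : ∏ i, v i ≠ 0 :=
    prod_ne_zero_iff.2 fun i _ hvi => h0 i (by simpa [hvi] using (hv i).symm)
  have hAV : (∏ i, ∏ j ∈ Ioi i, (v i + v j)) * ∏ i, ∏ j ∈ Ioi i, (v j - v i)
      = ∏ i, ∏ j ∈ Ioi i, (lam j ^ 2 - lam i ^ 2) := by
    simp_rw [← prod_mul_distrib]
    exact prod_congr rfl fun i _ => prod_congr rfl fun j _ => by linear_combination hv j - hv i
  have hBB : (∏ i, v i) * ∏ i, v i = ∏ i, lam i ^ 2 := by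
    rw [← prod_mul_distrib]
    exact prod_congr rfl fun i _ => by linear_combination hv i
  rw [← mul_div_mul_right _ _ (mul_ne_zero hV hB), ← hAV, ← hBB]
  simp only [map_mul, map_prod, eval_X, eval_vandermondePoly]
  ring

theorem sum_over_subsets_eq_zero_of_totalDegree_lt_general
    {K : Type*} [Field K] [CharZero K] (n : ℕ)
    (lam : Fin n → K) (h0 : ∀ i, lam i ≠ 0)
    (hsq : ∀ i j, i ≠ j → lam i ^ 2 ≠ lam j ^ 2)
    (P : MvPolynomial (Fin n) K) (hP : P.IsSymmetric)
    (hdeg : P.totalDegree < n * (n + 1) / 2) :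
    ∑ I : Finset (Fin n),
        MvPolynomial.eval (fun i => if i ∈ I then lam i else -lam i) P /
          ((∏ i : Fin n, ∏ j ∈ Ioi i,
              ((if i ∈ I then lam i else -lam i) + (if j ∈ I then lam j else -lam j))) *
            ∏ i : Fin n, (if i ∈ I then lam i else -lam i))
      = 0 := by
  have hdegG : (P * vandermondePoly n K * ∏ i, X i).totalDegree
      < 2 * (Fintype.card (Fin n) + 1).choose 2 := by
    have := totalDegree_mul_vandermondePoly_mul_prod_X_le P
    rw [Fintype.card_fin]
    rw [Nat.choose_two_right, Nat.add_sub_cancel, mul_comm (n + 1)] at this ⊢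
    omega
  have hodd := exists_odd_of_mem_support
    (fun i j hij => rename_swap_mul_vandermondePoly_mul_prod_X hP hij)
    (fun d hd => ne_zero_of_mem_support_mul_prod_X _ hd) hdegG
  rw [sum_congr rfl fun I _ => eval_div_eq_eval_mul_vandermondePoly_mul_prod_X_div P h0 hsq
    fun i => by split_ifs <;> ring, ← sum_div, sum_eval_ite_neg_eq_zero lam hodd, zero_div]

/-- If the total degree of the symmetric polynomial `P` is strictly less than `n(n+1)/2`,
then the sum `Σ_{I ⊆ [n]} P(λ_I) / (∏_{i<j}(λ_{i,I}+λ_{j,I}) · ∏_i λ_{i,I})` vanishes. -/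
theorem sum_over_subsets_eq_zero_of_totalDegree_lt
    {K : Type*} [Field K] [CharZero K] (n : ℕ) (hn : 1 ≤ n)
    (lam : Fin n → K) (h0 : ∀ i, lam i ≠ 0)
    (hsq : ∀ i j, i ≠ j → lam i ^ 2 ≠ lam j ^ 2)
    (P : MvPolynomial (Fin n) K) (hP : P.IsSymmetric)
    (hdeg : P.totalDegree < n * (n + 1) / 2) :
    ∑ I : Finset (Fin n),
        MvPolynomial.eval (fun i => if i ∈ I then lam i else -lam i) P /
          ((∏ i : Fin n, ∏ j ∈ Ioi i,
              ((if i ∈ I then lam i else -lam i) + (if j ∈ I then lam j else -lam j))) *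
            ∏ i : Fin n, (if i ∈ I then lam i else -lam i))
      = 0 :=
  sum_over_subsets_eq_zero_of_totalDegree_lt_general n lam h0 hsq P hP hdeg
end

section
/- Let P(x_1,…,x_n) be a symmetric polynomial in n variables over a field of characteristic zero, set F(x_1,…,x_n) = P(x_1,…,x_n) · ∏_{i≠j} (x_i − x_j) · ∏_{i<j} (x_i + x_j), and let Q(x) = ∏_{i=1}^n (x − λ_i)(x + λ_i). Then the sum, over all n-tuples (α_1,…,α_n) of roots of Q, of F(α_1,…,α_n) / (Q'(α_1)⋯Q'(α_n)) equals n! · Σ_{I ⊆ {1,…,n}} F(λ_I) / (Q'(λ_{1,I})⋯Q'(λ_{n,I})). (Tuples containing a repeated root, or containing both λ_i and −λ_i for some i, contribute zero because F vanishes there.) -/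
/-!
`F` vanishes at a tuple of roots of `Q` as soon as two coordinates have the same square, so
only the tuples `λ_I ∘ σ` (a sign choice `I` followed by a permutation `σ`) contribute, each
exactly once. Since `P` and both products are symmetric, the summand is invariant under
permuting coordinates, so each `I` contributes `n!` equal terms.
-/

open Finset

namespace Finset

theorem prod_offDiag_comp_perm {ι M : Type*} [Fintype ι] [DecidableEq ι] [CommMonoid M]
    (f : ι → ι → M) (σ : Equiv.Perm ι) :
    ∏ p ∈ univ.offDiag, f (σ p.1) (σ p.2) = ∏ p ∈ univ.offDiag, f p.1 p.2 :=
  prod_equiv (σ.prodCongr σ) (by simp) (by simp)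

theorem prod_prod_Ioi_comp_perm {ι M : Type*} [Fintype ι] [LinearOrder ι]
    [LocallyFiniteOrderTop ι] [CommMonoid M] {f : ι → ι → M} (hf : ∀ i j, f i j = f j i)
    (σ : Equiv.Perm ι) :
    ∏ i, ∏ j ∈ Ioi i, f (σ i) (σ j) = ∏ i, ∏ j ∈ Ioi i, f i j := by
  simp_rw [prod_sigma']
  set D := univ.sigma fun i : ι => Ioi i
  have hD : D.image (fun x => ⟨σ x.1 ⊓ σ x.2, σ x.1 ⊔ σ x.2⟩) = D := by
    ext ⟨a, b⟩
    suffices (∃ i, ∃ j, i < j ∧ σ i ⊓ σ j = a ∧ σ i ⊔ σ j = b) ↔ a < b by simpa [D]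
    refine ⟨?_, fun hab => ?_⟩
    · rintro ⟨i, j, hij, rfl, rfl⟩
      exact inf_le_sup.lt_of_ne (by simp [hij.ne])
    rcases lt_or_gt_of_ne (σ.symm.injective.ne hab.ne) with h | h
    · exact ⟨_, _, h, by simp [hab.le]⟩
    · exact ⟨_, _, h, by simp [hab.le]⟩
  nth_rw 2 [← hD]
  rw [prod_image fun x hx y hy => injOn_of_card_image_eq (by rw [hD]) hx hy]
  refine prod_congr rfl fun x _ => ?_
  rcases le_total (σ x.1) (σ x.2) with h | h
  · rw [inf_eq_left.2 h, sup_eq_right.2 h]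
  · rw [inf_eq_right.2 h, sup_eq_left.2 h, hf]

end Finset

theorem prod_offDiag_sub_mul_prod_Ioi_add_eq_zero {ι R : Type*} [Fintype ι] [LinearOrder ι]
    [LocallyFiniteOrderTop ι] [CommRing R] [NoZeroDivisors R] (w : ι → R) {i j : ι}
    (hij : i ≠ j) (h : w i ^ 2 = w j ^ 2) :
    (∏ p ∈ univ.offDiag, (w p.1 - w p.2)) * ∏ a, ∏ b ∈ Ioi a, (w a + w b) = 0 := by
  rcases (Commute.all _ _).sq_eq_sq_iff_eq_or_eq_neg.1 h with h | h
  · exact mul_eq_zero_of_left (prod_eq_zero (i := (i, j)) (by simp [hij]) (sub_eq_zero.2 h)) _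
  · apply mul_eq_zero_of_right
    rcases lt_or_gt_of_ne hij with hlt | hlt
    · exact prod_eq_zero (mem_univ i) (prod_eq_zero (mem_Ioi.2 hlt) (by rw [h, neg_add_cancel]))
    · exact prod_eq_zero (mem_univ j) (prod_eq_zero (mem_Ioi.2 hlt) (by rw [h, add_neg_cancel]))

theorem Polynomial.mem_roots_prod_X_sub_C_mul_X_add_C {ι K : Type*} [Fintype ι] [CommRing K]
    [IsDomain K] (v : ι → K) (x : K) :
    x ∈ (∏ i, (X - C (v i)) * (X + C (v i))).roots ↔ ∃ j, x = v j ∨ x = -v j := by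
  have hne : ∏ i, (X - C (v i)) * (X + C (v i)) ≠ 0 :=
    prod_ne_zero_iff.2 fun i _ => ((monic_X_sub_C _).mul (monic_X_add_C _)).ne_zero
  simp [mem_roots hne, eval_prod, prod_eq_zero_iff, sub_eq_zero, add_eq_zero_iff_eq_neg]

section signFlip

variable {ι K : Type*} [DecidableEq ι]

def signFlip [Neg K] (v : ι → K) (I : Finset ι) : ι → K := fun i => if i ∈ I then v i else -v i

theorem signFlip_eq_or_eq_neg [Neg K] (v : ι → K) (I : Finset ι) (i : ι) :
    signFlip v I i = v i ∨ signFlip v I i = -v i := by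
  unfold signFlip; split_ifs <;> simp

theorem signFlip_sq [Ring K] (v : ι → K) (I : Finset ι) (i : ι) :
    signFlip v I i ^ 2 = v i ^ 2 := by
  unfold signFlip; split_ifs <;> simp

theorem signFlip_injective [Neg K] {v : ι → K} (hneg : ∀ i, v i ≠ -v i) :
    Function.Injective (signFlip v) := by
  intro I J h
  ext i
  have hi := congrFun h i
  unfold signFlip at hi
  split_ifs at hi <;> simp_all [eq_comm]

theorem signFlip_comp_injective [Ring K] {v : ι → K}
    (hv : Function.Injective fun i => v i ^ 2) (hneg : ∀ i, v i ≠ -v i) :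
    Function.Injective fun p : Equiv.Perm ι × Finset ι => signFlip v p.2 ∘ p.1 := by
  rintro ⟨σ, I⟩ ⟨τ, J⟩ h
  have hστ : σ = τ := Equiv.ext fun i => hv <| by
    have := congrArg (· ^ 2) (congrFun h i)
    simpa only [Function.comp_apply, signFlip_sq] using this
  subst hστ
  have hIJ : signFlip v I = signFlip v J := σ.surjective.injective_comp_right h
  rw [signFlip_injective hneg hIJ]

theorem exists_signFlip_comp_eq [Fintype ι] [Ring K] {v : ι → K} {α : ι → K}
    (hα : ∀ i, ∃ j, α i = v j ∨ α i = -v j) (hinj : Function.Injective fun i => α i ^ 2) :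
    ∃ σ : Equiv.Perm ι, ∃ I : Finset ι, signFlip v I ∘ σ = α := by
  classical
  choose c hc using hα
  have hsq : ∀ i, α i ^ 2 = v (c i) ^ 2 := fun i => by rcases hc i with h | h <;> simp [h]
  have hc_inj : c.Injective := fun i i' h => hinj <| by simp only [hsq, h]
  set σ := Equiv.ofBijective c hc_inj.bijective_of_finite
  refine ⟨σ, univ.filter fun j => α (σ.symm j) = v j, funext fun i => ?_⟩
  have hσ : σ i = c i := rfl
  simp only [signFlip, Function.comp_apply, mem_filter, mem_univ, true_and,
    Equiv.symm_apply_apply]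
  rw [hσ]
  split_ifs with h
  exacts [h.symm, ((hc i).resolve_left h).symm]

theorem sum_piFinset_eq_card_perm_smul_sum_signFlip [Fintype ι] [CommRing K] [DecidableEq K]
    {M : Type*} [AddCommMonoid M] {v : ι → K}
    (hv : Function.Injective fun i => v i ^ 2) (hneg : ∀ i, v i ≠ -v i) {S : Finset K}
    (hS : ∀ x, x ∈ S ↔ ∃ j, x = v j ∨ x = -v j) {t : (ι → K) → M}
    (ht_zero : ∀ α, ¬Function.Injective (fun i => α i ^ 2) → t α = 0)
    (ht_perm : ∀ α (σ : Equiv.Perm ι), t (α ∘ σ) = t α) :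
    ∑ α ∈ Fintype.piFinset fun _ => S, t α
      = Fintype.card (Equiv.Perm ι) • ∑ I : Finset ι, t (signFlip v I) := by
  set T := univ.image fun p : Equiv.Perm ι × Finset ι => signFlip v p.2 ∘ p.1
  have hsub : T ⊆ Fintype.piFinset fun _ => S := by
    simp only [T, subset_iff, mem_image, mem_univ, true_and, Fintype.mem_piFinset, hS]
    rintro _ ⟨⟨σ, I⟩, rfl⟩ i
    exact ⟨σ i, signFlip_eq_or_eq_neg v I (σ i)⟩
  have hvanish : ∀ α ∈ Fintype.piFinset fun _ => S, α ∉ T → t α = 0 := by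
    refine fun α hα hαT => ht_zero α fun hinj => hαT ?_
    obtain ⟨σ, I, rfl⟩ :=
      exists_signFlip_comp_eq (fun i => (hS _).1 (Fintype.mem_piFinset.1 hα i)) hinj
    exact mem_image_of_mem _ (mem_univ (σ, I))
  rw [← sum_subset hsub hvanish, sum_image fun p _ q _ h => signFlip_comp_injective hv hneg h,
    ← univ_product_univ, sum_product_right]
  simp only [ht_perm, sum_const, card_univ, smul_sum]

end signFlip

theorem sum_tuples_eq_factorial_mul_sum_subsets_general
    {K : Type*} [Field K] [CharZero K] [DecidableEq K] (n : ℕ)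
    (lam : Fin n → K) (h0 : ∀ i, lam i ≠ 0)
    (hsq : ∀ i j, i ≠ j → lam i ^ 2 ≠ lam j ^ 2)
    (P : MvPolynomial (Fin n) K) (hP : P.IsSymmetric)
    (F : MvPolynomial (Fin n) K)
    (hF : F = P * (∏ p ∈ Finset.univ.offDiag, (MvPolynomial.X p.1 - MvPolynomial.X p.2)) *
        ∏ i : Fin n, ∏ j ∈ Ioi i, (MvPolynomial.X i + MvPolynomial.X j))
    (Q : Polynomial K)
    (hQ : Q = ∏ i : Fin n,
        ((Polynomial.X - Polynomial.C (lam i)) * (Polynomial.X + Polynomial.C (lam i)))) :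
    ∑ α ∈ Fintype.piFinset (fun _ : Fin n => Q.roots.toFinset),
        MvPolynomial.eval α F / ∏ i, (Polynomial.derivative Q).eval (α i)
      = (Nat.factorial n : K) *
          ∑ I : Finset (Fin n),
            MvPolynomial.eval (fun i => if i ∈ I then lam i else -lam i) F /
              ∏ i : Fin n,
                (Polynomial.derivative Q).eval (if i ∈ I then lam i else -lam i) := by
  have heval : ∀ w, MvPolynomial.eval w F = MvPolynomial.eval w P *
      ((∏ p ∈ univ.offDiag, (w p.1 - w p.2)) * ∏ i, ∏ j ∈ Ioi i, (w i + w j)) := by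
    simp [hF, mul_assoc]
  have hroots : ∀ x, x ∈ Q.roots.toFinset ↔ ∃ j, x = lam j ∨ x = -lam j := fun x => by
    rw [Multiset.mem_toFinset, hQ, Polynomial.mem_roots_prod_X_sub_C_mul_X_add_C]
  have hF_zero : ∀ α : Fin n → K, ¬Function.Injective (fun i => α i ^ 2) →
      MvPolynomial.eval α F = 0 := fun α hα => by
    obtain ⟨i, j, hij, hne⟩ := Function.not_injective_iff.1 hα
    rw [heval, prod_offDiag_sub_mul_prod_Ioi_add_eq_zero α hne hij, mul_zero]
  have hF_perm : ∀ α (σ : Equiv.Perm (Fin n)),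
      MvPolynomial.eval (α ∘ σ) F = MvPolynomial.eval α F := fun α σ => by
    simp only [heval, Function.comp_apply, prod_offDiag_comp_perm (fun a b => α a - α b),
      prod_prod_Ioi_comp_perm (f := fun a b => α a + α b) (fun _ _ => add_comm _ _)]
    rw [← MvPolynomial.eval_rename, hP σ]
  rw [sum_piFinset_eq_card_perm_smul_sum_signFlip
      (fun i j h => by_contra fun hij => hsq i j hij h)
      (fun i => by rw [Ne, CharZero.eq_neg_self_iff]; exact h0 i) hroots
      (fun α hα => by rw [hF_zero α hα, zero_div])
      (fun α σ => by
        rw [hF_perm]; congr 1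
        exact Equiv.prod_comp σ fun i => (Polynomial.derivative Q).eval (α i)),
    Fintype.card_perm, Fintype.card_fin, nsmul_eq_mul]
  rfl

/-- Let `P` be a symmetric polynomial, set
`F = P · ∏_{i≠j}(x_i - x_j) · ∏_{i<j}(x_i + x_j)`, and let
`Q(x) = ∏_{i=1}^n (x - λ_i)(x + λ_i)`.  Then the sum, over all `n`-tuples `(α_1,…,α_n)` of
roots of `Q`, of `F(α_1,…,α_n)/(Q'(α_1)⋯Q'(α_n))` equals
`n! · Σ_{I ⊆ [n]} F(λ_I)/(Q'(λ_{1,I})⋯Q'(λ_{n,I}))`. -/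
theorem sum_tuples_eq_factorial_mul_sum_subsets
    {K : Type*} [Field K] [CharZero K] [DecidableEq K] (n : ℕ) (hn : 1 ≤ n)
    (lam : Fin n → K) (h0 : ∀ i, lam i ≠ 0)
    (hsq : ∀ i j, i ≠ j → lam i ^ 2 ≠ lam j ^ 2)
    (P : MvPolynomial (Fin n) K) (hP : P.IsSymmetric)
    (F : MvPolynomial (Fin n) K)
    (hF : F = P * (∏ p ∈ Finset.univ.offDiag, (MvPolynomial.X p.1 - MvPolynomial.X p.2)) *
        ∏ i : Fin n, ∏ j ∈ Ioi i, (MvPolynomial.X i + MvPolynomial.X j))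
    (Q : Polynomial K)
    (hQ : Q = ∏ i : Fin n,
        ((Polynomial.X - Polynomial.C (lam i)) * (Polynomial.X + Polynomial.C (lam i)))) :
    ∑ α ∈ Fintype.piFinset (fun _ : Fin n => Q.roots.toFinset),
        MvPolynomial.eval α F / ∏ i, (Polynomial.derivative Q).eval (α i)
      = (Nat.factorial n : K) *
          ∑ I : Finset (Fin n),
            MvPolynomial.eval (fun i => if i ∈ I then lam i else -lam i) F /
              ∏ i : Fin n,
                (Polynomial.derivative Q).eval (if i ∈ I then lam i else -lam i) :=
  sum_tuples_eq_factorial_mul_sum_subsets_general n lam h0 hsq P hP F hF Q hQ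
end

section
/- Let λ_1,…,λ_n be n pairwise distinct elements of a field of characteristic zero, let 1 ≤ k ≤ n, and let P(x_1,…,x_k) be a symmetric polynomial of total degree at most k(n−k) in k variables. Then k! · Σ_{J} P((λ_j)_{j∈J}) / ∏_{j∈J, i∉J} (λ_j − λ_i) equals the coefficient of the monomial x_1^{n−1}⋯x_k^{n−1} in the polynomial P(x_1,…,x_k) · ∏_{i≠j} (x_i − x_j), where the sum ranges over all k-element subsets J of {1,…,n}, and in P((λ_j)_{j∈J}) the elements λ_j for j ∈ J are substituted for the variables (in any order, which is immaterial since P is symmetric). -/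
/-!
Write `Q = P · ∏_{i ≠ j} (x_i - x_j)` and `w_i = ∏_{j ≠ i} (λ_i - λ_j)⁻¹`. For a polynomial `f`
in one variable of degree `< n`, Lagrange interpolation at the `λ_i` gives
`coeff_{n-1} f = ∑_i f(λ_i) w_i`. Since `deg Q ≤ k(n-1)`, every monomial of `Q` other than
`x_1^{n-1} ⋯ x_k^{n-1}` has some exponent `< n-1`, so applying this in each variable gives
`coeff Q = ∑_{t : [k] → [n]} Q(λ_t) ∏_m w_{t_m}`. The Vandermonde factor kills the non-injective
`t`; for injective `t` with image `J` it cancels the factors of `∏_m w_{t_m}` coming from pairs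
inside `J`, leaving `P(λ_J) / ∏_{j ∈ J, i ∉ J} (λ_j - λ_i)`. Each `J` is the image of `k!` such
`t`, which contribute equally because `P` is symmetric.
-/

open Finset MvPolynomial

theorem Finset.prod_offDiag_eq_prod_prod_erase {α M : Type*} [DecidableEq α] [CommMonoid M]
    (s : Finset α) (f : α × α → M) :
    ∏ p ∈ s.offDiag, f p = ∏ a ∈ s, ∏ b ∈ s.erase a, f (a, b) :=
  prod_finset_product _ _ _ fun p => by simp [mem_offDiag, ne_comm, and_comm]

theorem Function.Injective.prod_prod_erase_eq_prod_offDiag_mul {σ ι M : Type*} [Fintype σ]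
    [DecidableEq σ] [Fintype ι] [DecidableEq ι] [CommMonoid M] {t : σ → ι}
    (ht : Function.Injective t)
    (f : ι → ι → M) :
    ∏ m, ∏ j ∈ univ.erase (t m), f (t m) j
      = (∏ p ∈ univ.offDiag, f (t p.1) (t p.2)) *
          ∏ a ∈ univ.image t, ∏ j ∈ (univ.image t)ᶜ, f a j := by
  have hsplit : ∀ m, univ.erase (t m) = (univ.erase m).image t ∪ (univ.image t)ᶜ := by
    intro m; ext j
    simp only [mem_erase, mem_univ, and_true, true_and, mem_union, mem_image, mem_compl]
    grind [Function.Injective]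
  have hdisj : ∀ m, Disjoint ((univ.erase m).image t) (univ.image t)ᶜ := fun m =>
    disjoint_compl_right_iff.2 (image_subset_image (erase_subset _ _))
  rw [prod_image ht.injOn, prod_offDiag_eq_prod_prod_erase, ← prod_mul_distrib]
  refine prod_congr rfl fun m _ => ?_
  rw [hsplit m, prod_union (hdisj m), prod_image ht.injOn]

section Vandermonde

variable {R σ : Type*} [CommRing R] [Fintype σ]

theorem eval_prod_offDiag_X_sub_X_ne_zero_iff [IsDomain R] (x : σ → R) :
    eval x (∏ p ∈ univ.offDiag, (X p.1 - X p.2) : MvPolynomial σ R) ≠ 0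
      ↔ Function.Injective x := by
  simp only [map_prod, map_sub, eval_X, prod_ne_zero_iff, mem_offDiag, mem_univ, true_and,
    sub_ne_zero]
  exact ⟨fun h a b hab => by_contra fun hne => h (a, b) hne hab, fun hx p hp => hx.ne hp⟩

theorem totalDegree_prod_offDiag_X_sub_X_le :
    (∏ p ∈ univ.offDiag, (X p.1 - X p.2) : MvPolynomial σ R).totalDegree
      ≤ Fintype.card σ * (Fintype.card σ - 1) := by
  have hX : ∀ s, (X s : MvPolynomial σ R).totalDegree ≤ 1 := fun s =>
    (totalDegree_monomial_le _ _).trans (by simp)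
  refine (totalDegree_finsetProd _ _).trans ?_
  calc ∑ p ∈ univ.offDiag, (X p.1 - X p.2 : MvPolynomial σ R).totalDegree
      ≤ ∑ _p ∈ (univ : Finset σ).offDiag, 1 := sum_le_sum fun p _ =>
        (totalDegree_sub _ _).trans (max_le (hX _) (hX _))
    _ = Fintype.card σ * (Fintype.card σ - 1) := by simp [offDiag_card, Nat.mul_sub_one]

theorem totalDegree_mul_prod_offDiag_X_sub_X_le {P : MvPolynomial σ R} {d : ℕ}
    (hP : P.totalDegree ≤ Fintype.card σ * d) :
    (P * ∏ p ∈ univ.offDiag, (X p.1 - X p.2)).totalDegree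
      ≤ Fintype.card σ * (d + (Fintype.card σ - 1)) := by
  rw [mul_add]
  exact (totalDegree_mul _ _).trans (add_le_add hP totalDegree_prod_offDiag_X_sub_X_le)

theorem eval_mul_prod_offDiag_X_sub_X_eq_zero [IsDomain R] (P : MvPolynomial σ R) {x : σ → R}
    (hx : ¬ Function.Injective x) : eval x (P * ∏ p ∈ univ.offDiag, (X p.1 - X p.2)) = 0 := by
  rw [map_mul, not_not.1 (mt (eval_prod_offDiag_X_sub_X_ne_zero_iff x).1 hx), mul_zero]

end Vandermonde

section Interpolation

variable {K ι : Type*} [Field K] [Fintype ι] [DecidableEq ι] {v : ι → K}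

theorem sum_pow_mul_nodalWeight (hv : Function.Injective v) {m : ℕ} (hm : m < Fintype.card ι) :
    ∑ i, v i ^ m * Lagrange.nodalWeight univ v i = if m = Fintype.card ι - 1 then 1 else 0 := by
  have h := Lagrange.coeff_eq_sum (s := univ) hv.injOn (P := Polynomial.X ^ m)
    (by rw [Polynomial.degree_X_pow]; exact_mod_cast hm)
  simp only [card_univ, Polynomial.coeff_X_pow, Polynomial.eval_pow, Polynomial.eval_X] at h
  simp only [Lagrange.nodalWeight, prod_inv_distrib, ← div_eq_mul_inv, ← h, eq_comm]

theorem sum_prod_pow_mul_nodalWeight [Nonempty ι] (hv : Function.Injective v) {σ : Type*}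
    [Fintype σ] [DecidableEq σ] (d : σ → ℕ)
    (hd : ∑ m, d m ≤ Fintype.card σ * (Fintype.card ι - 1)) :
    ∑ t : σ → ι, ∏ m, v (t m) ^ d m * Lagrange.nodalWeight univ v (t m)
      = if d = fun _ => Fintype.card ι - 1 then 1 else 0 := by
  have hcard := Fintype.card_pos (α := ι)
  rw [← Fintype.prod_sum (fun m i => v i ^ d m * Lagrange.nodalWeight univ v i)]
  split_ifs with hconst
  · simp [hconst, sum_pow_mul_nodalWeight hv (Nat.sub_lt hcard one_pos)]
  · obtain ⟨m, hm⟩ : ∃ m, d m < Fintype.card ι - 1 := by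
      by_contra! hge
      refine hconst (funext fun m => ?_)
      have hsum : ∑ m, d m = ∑ _m : σ, (Fintype.card ι - 1) :=
        le_antisymm (by simpa [mul_comm] using hd) (sum_le_sum fun m _ => hge m)
      exact ((sum_eq_sum_iff_of_le fun m _ => hge m).1 hsum.symm m (mem_univ m)).symm
    exact prod_eq_zero (mem_univ m)
      (by rw [sum_pow_mul_nodalWeight hv (by omega), if_neg hm.ne])

theorem coeff_eq_sum_eval_mul_prod_nodalWeight [Nonempty ι] (hv : Function.Injective v)
    {σ : Type*} [Fintype σ] [DecidableEq σ] (Q : MvPolynomial σ K)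
    (hQ : Q.totalDegree ≤ Fintype.card σ * (Fintype.card ι - 1)) :
    coeff (Finsupp.equivFunOnFinite.symm fun _ => Fintype.card ι - 1) Q
      = ∑ t : σ → ι, eval (v ∘ t) Q * ∏ m, Lagrange.nodalWeight univ v (t m) := by
  have hmonomial : ∀ d ∈ Q.support,
      ∑ t : σ → ι, ∏ m, v (t m) ^ d m * Lagrange.nodalWeight univ v (t m)
        = if d = Finsupp.equivFunOnFinite.symm fun _ => Fintype.card ι - 1 then 1 else 0 := by
    intro d hd
    have hdeg := (le_totalDegree hd).trans hQ
    rw [Finsupp.sum_fintype _ _ fun _ => rfl] at hdeg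
    simp only [sum_prod_pow_mul_nodalWeight hv d hdeg, Equiv.eq_symm_apply]
    rfl
  calc coeff (Finsupp.equivFunOnFinite.symm fun _ => Fintype.card ι - 1) Q
      = ∑ d ∈ Q.support, coeff d Q *
          if d = Finsupp.equivFunOnFinite.symm fun _ => Fintype.card ι - 1 then 1 else 0 := by
        simp only [mul_ite, mul_one, mul_zero, sum_ite_eq']
        split_ifs with h
        · rfl
        · exact notMem_support_iff.1 h
    _ = ∑ d ∈ Q.support, ∑ t : σ → ι,
          coeff d Q * ∏ m, v (t m) ^ d m * Lagrange.nodalWeight univ v (t m) := by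
        refine sum_congr rfl fun d hd => ?_
        rw [← hmonomial d hd, mul_sum]
    _ = _ := by
        rw [sum_comm]
        simp only [eval_eq', sum_mul, mul_assoc, prod_mul_distrib, Function.comp_apply]

end Interpolation

theorem eval_mul_prod_offDiag_mul_prod_nodalWeight {K ι σ : Type*} [Field K] [Fintype ι]
    [DecidableEq ι] [Fintype σ] [DecidableEq σ] {v : ι → K} (hv : Function.Injective v)
    (P : MvPolynomial σ K) {t : σ → ι} (ht : Function.Injective t) :
    eval (v ∘ t) (P * ∏ p ∈ univ.offDiag, (X p.1 - X p.2)) *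
        ∏ m, Lagrange.nodalWeight univ v (t m)
      = eval (v ∘ t) P / ∏ a ∈ univ.image t, ∏ j ∈ (univ.image t)ᶜ, (v a - v j) := by
  have hV := (eval_prod_offDiag_X_sub_X_ne_zero_iff (R := K) (v ∘ t)).2 (hv.comp ht)
  simp only [map_prod, map_sub, eval_X, Function.comp_apply] at hV
  simp only [map_mul, map_prod, map_sub, eval_X, Function.comp_apply, Lagrange.nodalWeight,
    prod_inv_distrib, ht.prod_prod_erase_eq_prod_offDiag_mul fun a j => v a - v j]
  field_simp

section Subsets

variable {α : Type*} [LinearOrder α] {k : ℕ}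

theorem Finset.injective_orderIsoOfFin_comp (J : Finset α) (hJ : J.card = k)
    (τ : Equiv.Perm (Fin k)) : Function.Injective fun m => (J.orderIsoOfFin hJ (τ m) : α) :=
  Subtype.coe_injective.comp ((J.orderIsoOfFin hJ).injective.comp τ.injective)

theorem Finset.image_orderIsoOfFin_comp (J : Finset α) (hJ : J.card = k)
    (τ : Equiv.Perm (Fin k)) : univ.image (fun m => (J.orderIsoOfFin hJ (τ m) : α)) = J := by
  ext a
  simp only [mem_image, mem_univ, true_and]
  refine ⟨fun ⟨m, hm⟩ => hm ▸ (J.orderIsoOfFin hJ (τ m)).2, fun ha => ?_⟩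
  exact ⟨τ.symm ((J.orderIsoOfFin hJ).symm ⟨a, ha⟩), by simp⟩

theorem sum_eq_sum_card_eq_sum_perm [Fintype α] {M : Type*} [AddCommMonoid M]
    (f : (Fin k → α) → M) (hf : ∀ t, ¬ Function.Injective t → f t = 0) :
    ∑ t, f t = ∑ J : {J : Finset α // J.card = k}, ∑ τ : Equiv.Perm (Fin k),
      f fun m => J.1.orderIsoOfFin J.2 (τ m) := by
  classical
  rw [← sum_filter_of_ne (p := Function.Injective) fun t _ h => not_imp_comm.1 (hf t) h,
    ← Fintype.sum_prod_type']
  symm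
  refine sum_bij (fun p _ m => p.1.1.orderIsoOfFin p.1.2 (p.2 m))
    (fun p _ => mem_filter.2 ⟨mem_univ _, p.1.1.injective_orderIsoOfFin_comp p.1.2 p.2⟩)
    ?_ ?_ fun _ _ => rfl
  · rintro ⟨⟨J, hJ⟩, τ⟩ - ⟨⟨J', hJ'⟩, τ'⟩ - h
    obtain rfl : J = J' := by
      rw [← J.image_orderIsoOfFin_comp hJ τ, ← J'.image_orderIsoOfFin_comp hJ' τ']
      exact congrArg (univ.image ·) h
    obtain rfl : τ = τ' := Equiv.ext fun m =>
      (J.orderIsoOfFin hJ).injective (Subtype.coe_injective (congrFun h m))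
    rfl
  · intro t ht
    have ht : Function.Injective t := (mem_filter.1 ht).2
    have hJ : (univ.image t).card = k := by simp [card_image_of_injective _ ht]
    let τ : Fin k → Fin k := fun m =>
      ((univ.image t).orderIsoOfFin hJ).symm ⟨t m, mem_image_of_mem t (mem_univ m)⟩
    have hτ : Function.Injective τ := fun a b hab => ht (by simpa [τ] using hab)
    exact ⟨(⟨univ.image t, hJ⟩, Equiv.ofBijective τ hτ.bijective_of_finite), mem_univ _,
      funext fun m => by simp [τ]⟩

end Subsets

theorem MvPolynomial.IsSymmetric.eval_comp_perm {R σ : Type*} [CommSemiring R]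
    {P : MvPolynomial σ R} (hP : P.IsSymmetric) (x : σ → R) (τ : Equiv.Perm σ) :
    eval (x ∘ τ) P = eval x P := by
  rw [← eval_rename, hP τ]

theorem factorial_mul_sum_subsets_eq_coeff_general
    {K : Type*} [Field K] (n k : ℕ) (hk : 1 ≤ k) (hkn : k ≤ n)
    (lam : Fin n → K) (hlam : Function.Injective lam)
    (P : MvPolynomial (Fin k) K) (hP : P.IsSymmetric)
    (hdeg : P.totalDegree ≤ k * (n - k)) :
    (Nat.factorial k : K) *
        ∑ J : {J : Finset (Fin n) // J.card = k},
          MvPolynomial.eval (fun i => lam ((J.1.orderIsoOfFin J.2 i : Fin n))) P /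
            ∏ j ∈ J.1, ∏ i ∈ J.1ᶜ, (lam j - lam i)
      = MvPolynomial.coeff (Finsupp.equivFunOnFinite.symm fun _ => n - 1)
          (P * ∏ p ∈ Finset.univ.offDiag, (MvPolynomial.X p.1 - MvPolynomial.X p.2)) := by
  have : Nonempty (Fin n) := ⟨⟨0, by omega⟩⟩
  have hdegQ := totalDegree_mul_prod_offDiag_X_sub_X_le (P := P) (d := n - k) (by simpa using hdeg)
  rw [Fintype.card_fin, show n - k + (k - 1) = n - 1 by omega] at hdegQ
  have hcoeff := coeff_eq_sum_eval_mul_prod_nodalWeight hlam (σ := Fin k) _ (by simpa using hdegQ)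
  rw [Fintype.card_fin] at hcoeff
  rw [hcoeff, sum_eq_sum_card_eq_sum_perm _ fun t ht => by
    rw [eval_mul_prod_offDiag_X_sub_X_eq_zero P fun h => ht h.of_comp, zero_mul], mul_sum]
  refine sum_congr rfl fun J _ => ?_
  have hterm : ∀ τ : Equiv.Perm (Fin k),
      eval (lam ∘ fun m => (J.1.orderIsoOfFin J.2 (τ m) : Fin n))
          (P * ∏ p ∈ univ.offDiag, (X p.1 - X p.2)) *
        ∏ m, Lagrange.nodalWeight univ lam (J.1.orderIsoOfFin J.2 (τ m))
      = eval (fun i => lam (J.1.orderIsoOfFin J.2 i)) P /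
          ∏ j ∈ J.1, ∏ i ∈ J.1ᶜ, (lam j - lam i) := fun τ => by
    rw [eval_mul_prod_offDiag_mul_prod_nodalWeight hlam P
      (J.1.injective_orderIsoOfFin_comp J.2 τ), J.1.image_orderIsoOfFin_comp]
    exact congrArg (· / _) (hP.eval_comp_perm (fun i => lam (J.1.orderIsoOfFin J.2 i)) τ)
  rw [sum_congr rfl fun τ _ => hterm τ, sum_const, card_univ, Fintype.card_perm,
    Fintype.card_fin, nsmul_eq_mul]

/-- Interpolation identity for the ordinary Grassmannian (Theorem 1 of the author's previous
work).  Let `λ_1,…,λ_n` be pairwise distinct, `1 ≤ k ≤ n`, and `P(x_1,…,x_k)` a symmetric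
polynomial of total degree at most `k(n-k)`.  Then
`k! · Σ_{J ⊆ [n], |J| = k} P((λ_j)_{j ∈ J}) / ∏_{j ∈ J, i ∉ J}(λ_j - λ_i)` equals the
coefficient of `x_1^{n-1}⋯x_k^{n-1}` in `P · ∏_{i≠j}(x_i - x_j)`. -/
theorem factorial_mul_sum_subsets_eq_coeff
    {K : Type*} [Field K] [CharZero K] (n k : ℕ) (hk : 1 ≤ k) (hkn : k ≤ n)
    (lam : Fin n → K) (hlam : Function.Injective lam)
    (P : MvPolynomial (Fin k) K) (hP : P.IsSymmetric)
    (hdeg : P.totalDegree ≤ k * (n - k)) :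
    (Nat.factorial k : K) *
        ∑ J : {J : Finset (Fin n) // J.card = k},
          MvPolynomial.eval (fun i => lam ((J.1.orderIsoOfFin J.2 i : Fin n))) P /
            ∏ j ∈ J.1, ∏ i ∈ J.1ᶜ, (lam j - lam i)
      = MvPolynomial.coeff (Finsupp.equivFunOnFinite.symm fun _ => n - 1)
          (P * ∏ p ∈ Finset.univ.offDiag, (MvPolynomial.X p.1 - MvPolynomial.X p.2)) :=
  factorial_mul_sum_subsets_eq_coeff_general n k hk hkn lam hlam P hP hdeg
end

section
/- For every n ≥ 1, the coefficient of the monomial x_1^{2n−1}⋯x_n^{2n−1} in the polynomial (x_1 + ⋯ + x_n)^{n(n+1)/2} · ∏_{i≠j} (x_i − x_j) · ∏_{i<j} (x_i + x_j) equals n! · ( (n(n+1)/2)! / ∏_{i=1}^n (2i−1)! ) · ∏_{1 ≤ i < j ≤ n} (2j − 2i). -/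
open Finset MvPolynomial Equiv Matrix

theorem prod_offDiag_aux (n : ℕ) {M : Type*} [CommMonoid M] (f : Fin n × Fin n → M) :
    ∏ p ∈ Finset.univ.offDiag, f p = ∏ i : Fin n, ∏ j ∈ Ioi i, (f (i, j) * f (j, i)) := by
  have key : (Finset.univ.offDiag : Finset (Fin n × Fin n)) =
      ((univ ×ˢ univ).filter fun p => p.1 < p.2) ∪
        ((univ ×ˢ univ).filter fun p => p.2 < p.1) := by
    ext p
    simp only [Finset.mem_offDiag, Finset.mem_filter, Finset.mem_union, Finset.mem_univ,
      true_and, Finset.mem_product, and_true]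
    constructor
    · intro h; exact lt_or_gt_of_ne h
    · rintro (h | h); exacts [h.ne, h.ne']
  have h1 : ∀ g : Fin n × Fin n → M,
      ∏ p ∈ (univ ×ˢ univ).filter (fun p => p.1 < p.2), g p
        = ∏ i : Fin n, ∏ j ∈ Ioi i, g (i, j) := by
    intro g
    rw [Finset.prod_filter, Finset.prod_product]
    refine Finset.prod_congr rfl fun i _ => ?_
    rw [show (Ioi i) = univ.filter (fun j => i < j) by ext j; simp]
    rw [Finset.prod_filter]
  have h2 : ((univ ×ˢ univ).filter fun p : Fin n × Fin n => p.2 < p.1)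
      = ((univ ×ˢ univ).filter fun p : Fin n × Fin n => p.1 < p.2).image Prod.swap := by
    ext p
    simp only [Finset.mem_image, Finset.mem_filter, Finset.mem_product, Finset.mem_univ,
      true_and, and_true]
    constructor
    · intro h; exact ⟨(p.2, p.1), h, rfl⟩
    · rintro ⟨a, h, rfl⟩; exact h
  rw [key, Finset.prod_union]
  · rw [h1, h2, Finset.prod_image (by intro a _ b _ h; exact Prod.swap_injective h), h1,
      ← Finset.prod_mul_distrib]
    refine Finset.prod_congr rfl fun i _ => ?_
    rw [← Finset.prod_mul_distrib]; rfl
  · rw [Finset.disjoint_filter]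
    intro p _ h1 h2
    exact absurd h1 (asymm h2)

theorem prod_monomial_one (n : ℕ) {ι : Type*} (s : Finset ι) (g : ι → (Fin n →₀ ℕ)) :
    ∏ i ∈ s, (monomial (g i) (1:ℚ)) = monomial (∑ i ∈ s, g i) 1 := by
  induction s using Finset.cons_induction with
  | empty => simp
  | cons a s ha ih => rw [Finset.prod_cons, ih, Finset.sum_cons, monomial_mul, one_mul]

theorem prod_X_pow_eq (n : ℕ) (c : Fin n → ℕ) :
    (∏ i : Fin n, (X i : MvPolynomial (Fin n) ℚ) ^ c i)
      = monomial (Finsupp.equivFunOnFinite.symm c) 1 := by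
  have h : (Finsupp.equivFunOnFinite.symm c : Fin n →₀ ℕ)
      = ∑ i : Fin n, Finsupp.single i (c i) := by
    ext j
    simp [Finsupp.single_apply, Finsupp.finset_sum_apply]
  rw [h, ← prod_monomial_one]
  exact Finset.prod_congr rfl fun i _ => X_pow_eq_monomial

theorem coeff_sum_X_pow (n N : ℕ) (d : Fin n →₀ ℕ) :
    MvPolynomial.coeff d ((∑ i : Fin n, MvPolynomial.X i) ^ N : MvPolynomial (Fin n) ℚ)
      = if ∑ i, d i = N then (Nat.multinomial univ d : ℚ) else 0 := by
  rw [Finset.sum_pow_eq_sum_piAntidiag univ (fun i => (X i : MvPolynomial (Fin n) ℚ)) N]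
  rw [MvPolynomial.coeff_sum]
  have hterm : ∀ k ∈ piAntidiag univ N,
      MvPolynomial.coeff d ((Nat.multinomial univ k : MvPolynomial (Fin n) ℚ) *
        ∏ i : Fin n, X i ^ k i)
      = if k = (d : Fin n → ℕ) then (Nat.multinomial univ d : ℚ) else 0 := by
    intro k hk
    rw [prod_X_pow_eq, ← MvPolynomial.C_eq_coe_nat, MvPolynomial.coeff_C_mul,
      MvPolynomial.coeff_monomial]
    by_cases hkd : k = (d : Fin n → ℕ)
    · subst hkd
      rw [if_pos (Finsupp.equivFunOnFinite_symm_coe d), if_pos rfl, mul_one]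
    · rw [if_neg hkd, if_neg, mul_zero]
      intro he
      exact hkd (by rw [← he]; rfl)
  rw [Finset.sum_congr rfl hterm]
  by_cases hd : ∑ i, d i = N
  · rw [if_pos hd]
    rw [Finset.sum_eq_single_of_mem (d : Fin n → ℕ)]
    · rw [if_pos rfl]
    · rw [Finset.mem_piAntidiag]
      exact ⟨hd, fun i _ => Finset.mem_univ i⟩
    · intro k _ hk; rw [if_neg hk]
  · rw [if_neg hd]
    apply Finset.sum_eq_zero
    intro k hk
    rw [Finset.mem_piAntidiag] at hk
    rw [if_neg]
    intro he
    exact hd (by rw [← hk.1]; exact Finset.sum_congr rfl fun i _ => by rw [he])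

theorem term_coeff (n : ℕ) (hn : 1 ≤ n) (α β : Equiv.Perm (Fin n)) :
    MvPolynomial.coeff (Finsupp.equivFunOnFinite.symm fun _ : Fin n => 2 * n - 1)
      ((∑ i : Fin n, X i) ^ (n * (n + 1) / 2) *
        monomial (Finsupp.equivFunOnFinite.symm fun i => (α i : ℕ) + 2 * (β i : ℕ)) (1 : ℚ))
    = ((n * (n + 1) / 2).factorial : ℚ) *
        (∏ i : Fin n, ((2 * n - 1 - 2 * (β i : ℕ)).descFactorial (α i : ℕ) : ℚ)) /
        ∏ i ∈ range n, ((2 * (i + 1) - 1).factorial : ℚ) := by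
  have hβ : ∀ i, 2 * (β i : ℕ) ≤ 2 * n - 2 := fun i => by have := (β i).isLt; omega
  have hD : (∏ i ∈ range n, ((2 * (i + 1) - 1).factorial : ℚ))
      = ∏ i : Fin n, (((2 * n - 1 - 2 * (β i : ℕ)).factorial : ℚ)) := by
    symm
    rw [Equiv.prod_comp β (fun i : Fin n => (((2 * n - 1 - 2 * (i : ℕ)).factorial : ℚ))),
      Fin.prod_univ_eq_prod_range (fun i => ((2 * n - 1 - 2 * i).factorial : ℚ)) n,
      ← Finset.prod_range_reflect (fun j => ((2 * (j + 1) - 1).factorial : ℚ)) n]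
    refine Finset.prod_congr rfl fun i hi => ?_
    rw [Finset.mem_range] at hi
    have harg : 2 * (n - 1 - i + 1) - 1 = 2 * n - 1 - 2 * i := by omega
    rw [harg]
  have hDne : (∏ i ∈ range n, ((2 * (i + 1) - 1).factorial : ℚ)) ≠ 0 :=
    Finset.prod_ne_zero_iff.2 fun i _ => Nat.cast_ne_zero.2 (Nat.factorial_ne_zero _)
  rw [MvPolynomial.coeff_mul_monomial']
  by_cases h : ∀ i : Fin n, (α i : ℕ) + 2 * (β i : ℕ) ≤ 2 * n - 1
  · have hle : (Finsupp.equivFunOnFinite.symm fun i : Fin n => (α i : ℕ) + 2 * (β i : ℕ))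
        ≤ Finsupp.equivFunOnFinite.symm fun _ : Fin n => 2 * n - 1 := fun i => h i
    rw [if_pos hle, mul_one]
    set d : Fin n →₀ ℕ := (Finsupp.equivFunOnFinite.symm fun _ : Fin n => 2 * n - 1) -
      Finsupp.equivFunOnFinite.symm fun i : Fin n => (α i : ℕ) + 2 * (β i : ℕ) with hd
    have hcoe : ∀ i : Fin n, d i = 2 * n - 1 - ((α i : ℕ) + 2 * (β i : ℕ)) := fun i => rfl
    have hsum : ∑ i : Fin n, d i = n * (n + 1) / 2 := by
      have hα : ∑ i : Fin n, (α i : ℕ) = ∑ i ∈ range n, i := by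
        rw [Equiv.sum_comp α (fun i : Fin n => (i : ℕ)),
          Fin.sum_univ_eq_sum_range (fun i => i) n]
      have hβs : ∑ i : Fin n, 2 * (β i : ℕ) = 2 * ∑ i ∈ range n, i := by
        rw [← Finset.mul_sum, Equiv.sum_comp β (fun i : Fin n => (i : ℕ)),
          Fin.sum_univ_eq_sum_range (fun i => i) n]
      have hsplit : (∑ i : Fin n, d i) + ∑ i : Fin n, ((α i : ℕ) + 2 * (β i : ℕ))
          = n * (2 * n - 1) := by
        rw [← Finset.sum_add_distrib,
          Finset.sum_congr rfl (fun (i : Fin n) _ =>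
            (by have := h i; have := hcoe i; omega :
              d i + ((α i : ℕ) + 2 * (β i : ℕ)) = 2 * n - 1))]
        simp [Finset.sum_const, mul_comm]
      rw [Finset.sum_add_distrib, hα, hβs] at hsplit
      have hgauss : (∑ i ∈ range n, i) * 2 = n * (n - 1) := Finset.sum_range_id_mul_two n
      have hN : n * (n + 1) / 2 * 2 = n * (n + 1) :=
        Nat.div_mul_cancel (Nat.even_mul_succ_self n).two_dvd
      have hsq : n * (n - 1) + n = n * n := by
        rcases n with _ | m
        · rfl
        · simp only [Nat.succ_sub_one]; ring
      have hsq2 : n * (n + 1) = n * n + n := by ring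
      have h2n : n * (2 * n - 1) + n = 2 * (n * n) := by
        rcases n with _ | m
        · rfl
        · have h21 : 2 * (m + 1) - 1 = 2 * m + 1 := by omega
          rw [h21]; ring
      omega
    rw [coeff_sum_X_pow, hsum, if_pos rfl, eq_div_iff hDne, hD]
    have hfac : ∀ i : Fin n, (2 * n - 1 - 2 * (β i : ℕ)).factorial
        = (d i).factorial * (2 * n - 1 - 2 * (β i : ℕ)).descFactorial (α i : ℕ) := by
      intro i
      have h1 : (α i : ℕ) ≤ 2 * n - 1 - 2 * (β i : ℕ) := by have := h i; have := hβ i; omega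
      have h2 : d i = 2 * n - 1 - 2 * (β i : ℕ) - (α i : ℕ) := by
        rw [hcoe i]; have := hβ i; omega
      rw [h2, Nat.factorial_mul_descFactorial h1]
    have hnat : Nat.multinomial univ d * ∏ i : Fin n, (2 * n - 1 - 2 * (β i : ℕ)).factorial
        = (n * (n + 1) / 2).factorial *
            ∏ i : Fin n, (2 * n - 1 - 2 * (β i : ℕ)).descFactorial (α i : ℕ) := by
      rw [Finset.prod_congr rfl fun i _ => hfac i, Finset.prod_mul_distrib, ← mul_assoc,
        mul_comm (Nat.multinomial univ d), Nat.multinomial_spec, hsum]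
    exact_mod_cast congrArg (Nat.cast : ℕ → ℚ) hnat
  · push_neg at h
    obtain ⟨i0, hi0⟩ := h
    rw [if_neg, (by
      apply Finset.prod_eq_zero (Finset.mem_univ i0)
      rw [Nat.cast_eq_zero, Nat.descFactorial_eq_zero_iff_lt]
      have := hβ i0; omega :
        (∏ i : Fin n, ((2 * n - 1 - 2 * (β i : ℕ)).descFactorial (α i : ℕ) : ℚ)) = 0),
      mul_zero, zero_div]
    intro hle
    exact absurd (show (α i0 : ℕ) + 2 * (β i0 : ℕ) ≤ 2 * n - 1 from hle i0) (by omega)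

theorem stepA (n : ℕ) :
    (∏ p ∈ Finset.univ.offDiag,
        (X p.1 - X p.2 : MvPolynomial (Fin n) ℚ)) * ∏ i : Fin n, ∏ j ∈ Ioi i, (X i + X j)
    = C (∏ i : Fin n, ∏ j ∈ Ioi i, (-1 : ℚ)) *
        ((Matrix.vandermonde fun i => (X i : MvPolynomial (Fin n) ℚ)).det *
          (Matrix.vandermonde fun i => (X i : MvPolynomial (Fin n) ℚ) ^ 2).det) := by
  rw [prod_offDiag_aux n (fun p => (X p.1 - X p.2 : MvPolynomial (Fin n) ℚ)),
    Matrix.det_vandermonde, Matrix.det_vandermonde, map_prod]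
  rw [← Finset.prod_mul_distrib, ← Finset.prod_mul_distrib, ← Finset.prod_mul_distrib]
  refine Finset.prod_congr rfl fun i _ => ?_
  rw [map_prod, ← Finset.prod_mul_distrib, ← Finset.prod_mul_distrib,
    ← Finset.prod_mul_distrib]
  refine Finset.prod_congr rfl fun j _ => ?_
  rw [map_neg, _root_.map_one]
  ring

theorem inner_det (n : ℕ) (β : Equiv.Perm (Fin n)) :
    ∑ α : Equiv.Perm (Fin n), ((Equiv.Perm.sign α : ℤ) : ℚ) *
        ∏ i : Fin n, ((2 * n - 1 - 2 * (β i : ℕ)).descFactorial (α i : ℕ) : ℚ)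
      = ((Equiv.Perm.sign β : ℤ) : ℚ) *
          ((∏ i : Fin n, ∏ j ∈ Ioi i, (-1 : ℚ)) *
            ∏ i : Fin n, ∏ j ∈ Ioi i, ((2 * (j : ℕ) - 2 * (i : ℕ) : ℕ) : ℚ)) := by
  set v : Fin n → ℚ := fun k => ((2 * n - 1 - 2 * (k : ℕ) : ℕ) : ℚ) with hv
  set M : Matrix (Fin n) (Fin n) ℚ :=
    Matrix.of fun i j => ((2 * n - 1 - 2 * (β i : ℕ)).descFactorial (j : ℕ) : ℚ) with hM
  have h1 : ∑ α : Equiv.Perm (Fin n), ((Equiv.Perm.sign α : ℤ) : ℚ) *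
        ∏ i : Fin n, ((2 * n - 1 - 2 * (β i : ℕ)).descFactorial (α i : ℕ) : ℚ)
      = Mᵀ.det := by
    rw [Matrix.det_apply]
    refine Finset.sum_congr rfl fun α _ => ?_
    rw [Units.smul_def, zsmul_eq_mul]
    push_cast
    congr 1
  rw [h1, Matrix.det_transpose]
  have h2 : M = Matrix.of fun (i j : Fin n) =>
      (Polynomial.eval ((2 * n - 1 - 2 * (β i : ℕ) : ℕ) : ℚ) (descPochhammer ℚ (j : ℕ))) := by
    ext i j
    rw [hM, Matrix.of_apply, Matrix.of_apply, descPochhammer_eval_eq_descFactorial]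
  rw [h2, ← Matrix.det_eval_matrixOfPolynomials_eq_det_vandermonde
    (fun i => ((2 * n - 1 - 2 * (β i : ℕ) : ℕ) : ℚ)) (fun j => descPochhammer ℚ (j : ℕ))
    (fun j => descPochhammer_natDegree ℚ (j : ℕ)) (fun j => monic_descPochhammer ℚ (j : ℕ))]
  have h3 : (Matrix.vandermonde fun i => ((2 * n - 1 - 2 * (β i : ℕ) : ℕ) : ℚ))
      = (Matrix.vandermonde v).submatrix β id := by
    ext i j
    simp [Matrix.vandermonde, hv]
  rw [h3, Matrix.det_permute, Matrix.det_vandermonde]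
  have h4 : ∏ i : Fin n, ∏ j ∈ Ioi i, (v j - v i)
      = (∏ i : Fin n, ∏ j ∈ Ioi i, (-1 : ℚ)) *
          ∏ i : Fin n, ∏ j ∈ Ioi i, ((2 * (j : ℕ) - 2 * (i : ℕ) : ℕ) : ℚ) := by
    rw [← Finset.prod_mul_distrib]
    refine Finset.prod_congr rfl fun i _ => ?_
    rw [← Finset.prod_mul_distrib]
    refine Finset.prod_congr rfl fun j hj => ?_
    rw [Finset.mem_Ioi] at hj
    have hij : (i : ℕ) < (j : ℕ) := hj
    have hjn : (j : ℕ) < n := j.isLt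
    simp only [hv]
    have e1 : ((2 * n - 1 - 2 * (j : ℕ) : ℕ) : ℚ) = (2 * n - 1 : ℕ) - 2 * (j : ℕ) := by
      have : 2 * (j : ℕ) ≤ 2 * n - 1 := by omega
      push_cast [Nat.cast_sub this]
      ring
    have e2 : ((2 * n - 1 - 2 * (i : ℕ) : ℕ) : ℚ) = (2 * n - 1 : ℕ) - 2 * (i : ℕ) := by
      have : 2 * (i : ℕ) ≤ 2 * n - 1 := by omega
      push_cast [Nat.cast_sub this]
      ring
    have e3 : ((2 * (j : ℕ) - 2 * (i : ℕ) : ℕ) : ℚ) = 2 * (j : ℕ) - 2 * (i : ℕ) := by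
      have : 2 * (i : ℕ) ≤ 2 * (j : ℕ) := by omega
      push_cast [Nat.cast_sub this]
      ring
    rw [e1, e2, e3]
    ring
  rw [h4]

theorem sum_eval (n : ℕ) :
    ∑ σ : Equiv.Perm (Fin n), ∑ τ : Equiv.Perm (Fin n),
      ((Equiv.Perm.sign σ : ℤ) : ℚ) * ((Equiv.Perm.sign τ : ℤ) : ℚ) *
        (((n * (n + 1) / 2).factorial : ℚ) *
          (∏ i : Fin n, ((2 * n - 1 - 2 * (τ⁻¹ i : ℕ)).descFactorial (σ⁻¹ i : ℕ) : ℚ)) /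
          ∏ i ∈ range n, ((2 * (i + 1) - 1).factorial : ℚ))
    = (∏ i : Fin n, ∏ j ∈ Ioi i, (-1 : ℚ)) *
        ((n.factorial : ℚ) *
          (((n * (n + 1) / 2).factorial : ℚ) /
            ∏ i ∈ range n, ((2 * (i + 1) - 1).factorial : ℚ)) *
          ∏ i : Fin n, ∏ j ∈ Ioi i, ((2 * (j : ℕ) - 2 * (i : ℕ) : ℕ) : ℚ)) := by
  have swap1 : ∀ G : Equiv.Perm (Fin n) → ℚ, ∑ σ : Equiv.Perm (Fin n), G σ⁻¹ = ∑ σ, G σ :=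
    fun G => Equiv.sum_comp (Equiv.inv (Equiv.Perm (Fin n))) G
  -- replace σ⁻¹, τ⁻¹ by α, β
  have step1 : ∑ σ : Equiv.Perm (Fin n), ∑ τ : Equiv.Perm (Fin n),
      ((Equiv.Perm.sign σ : ℤ) : ℚ) * ((Equiv.Perm.sign τ : ℤ) : ℚ) *
        (((n * (n + 1) / 2).factorial : ℚ) *
          (∏ i : Fin n, ((2 * n - 1 - 2 * (τ⁻¹ i : ℕ)).descFactorial (σ⁻¹ i : ℕ) : ℚ)) /
          ∏ i ∈ range n, ((2 * (i + 1) - 1).factorial : ℚ))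
      = ∑ α : Equiv.Perm (Fin n), ∑ β : Equiv.Perm (Fin n),
      ((Equiv.Perm.sign α : ℤ) : ℚ) * ((Equiv.Perm.sign β : ℤ) : ℚ) *
        (((n * (n + 1) / 2).factorial : ℚ) *
          (∏ i : Fin n, ((2 * n - 1 - 2 * (β i : ℕ)).descFactorial (α i : ℕ) : ℚ)) /
          ∏ i ∈ range n, ((2 * (i + 1) - 1).factorial : ℚ)) := by
    refine Fintype.sum_equiv (Equiv.inv (Equiv.Perm (Fin n))) _ _ fun σ => ?_
    refine Fintype.sum_equiv (Equiv.inv (Equiv.Perm (Fin n))) _ _ fun τ => ?_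
    simp [Equiv.Perm.sign_inv]
  rw [step1]
  have step2 : ∀ α : Equiv.Perm (Fin n), ∀ β : Equiv.Perm (Fin n),
      ((Equiv.Perm.sign α : ℤ) : ℚ) * ((Equiv.Perm.sign β : ℤ) : ℚ) *
        (((n * (n + 1) / 2).factorial : ℚ) *
          (∏ i : Fin n, ((2 * n - 1 - 2 * (β i : ℕ)).descFactorial (α i : ℕ) : ℚ)) /
          ∏ i ∈ range n, ((2 * (i + 1) - 1).factorial : ℚ))
      = ((Equiv.Perm.sign β : ℤ) : ℚ) *
          ((((n * (n + 1) / 2).factorial : ℚ) / ∏ i ∈ range n, ((2 * (i + 1) - 1).factorial : ℚ)) *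
            (((Equiv.Perm.sign α : ℤ) : ℚ) *
              ∏ i : Fin n, ((2 * n - 1 - 2 * (β i : ℕ)).descFactorial (α i : ℕ) : ℚ))) := by
    intro α β
    ring
  have sq : ∀ β : Equiv.Perm (Fin n),
      ((Equiv.Perm.sign β : ℤ) : ℚ) * ((Equiv.Perm.sign β : ℤ) : ℚ) = 1 := by
    intro β
    rw [← Int.cast_mul, ← Units.val_mul, Int.units_mul_self]
    norm_num
  calc ∑ α : Equiv.Perm (Fin n), ∑ β : Equiv.Perm (Fin n),
      ((Equiv.Perm.sign α : ℤ) : ℚ) * ((Equiv.Perm.sign β : ℤ) : ℚ) *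
        (((n * (n + 1) / 2).factorial : ℚ) *
          (∏ i : Fin n, ((2 * n - 1 - 2 * (β i : ℕ)).descFactorial (α i : ℕ) : ℚ)) /
          ∏ i ∈ range n, ((2 * (i + 1) - 1).factorial : ℚ))
      = ∑ β : Equiv.Perm (Fin n), ∑ α : Equiv.Perm (Fin n),
          ((Equiv.Perm.sign β : ℤ) : ℚ) *
          ((((n * (n + 1) / 2).factorial : ℚ) / ∏ i ∈ range n, ((2 * (i + 1) - 1).factorial : ℚ)) *
            (((Equiv.Perm.sign α : ℤ) : ℚ) *
              ∏ i : Fin n, ((2 * n - 1 - 2 * (β i : ℕ)).descFactorial (α i : ℕ) : ℚ))) := by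
        rw [Finset.sum_comm]
        exact Finset.sum_congr rfl fun β _ => Finset.sum_congr rfl fun α _ => step2 α β
    _ = ∑ β : Equiv.Perm (Fin n),
          ((Equiv.Perm.sign β : ℤ) : ℚ) *
          ((((n * (n + 1) / 2).factorial : ℚ) / ∏ i ∈ range n, ((2 * (i + 1) - 1).factorial : ℚ)) *
            (((Equiv.Perm.sign β : ℤ) : ℚ) *
              ((∏ i : Fin n, ∏ j ∈ Ioi i, (-1 : ℚ)) *
                ∏ i : Fin n, ∏ j ∈ Ioi i, ((2 * (j : ℕ) - 2 * (i : ℕ) : ℕ) : ℚ)))) := by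
        refine Finset.sum_congr rfl fun β _ => ?_
        rw [← Finset.mul_sum, ← Finset.mul_sum, inner_det n β]
    _ = ∑ β : Equiv.Perm (Fin n),
          ((((n * (n + 1) / 2).factorial : ℚ) / ∏ i ∈ range n, ((2 * (i + 1) - 1).factorial : ℚ)) *
            ((∏ i : Fin n, ∏ j ∈ Ioi i, (-1 : ℚ)) *
              ∏ i : Fin n, ∏ j ∈ Ioi i, ((2 * (j : ℕ) - 2 * (i : ℕ) : ℕ) : ℚ))) := by
        refine Finset.sum_congr rfl fun β _ => ?_
        have key : ∀ s q p : ℚ, s * s = 1 → s * (q * (s * p)) = q * p := fun s q p h => by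
          have h2 : s * (q * (s * p)) = (s * s) * (q * p) := by ring
          rw [h2, h, one_mul]
        exact key _ _ _ (sq β)
    _ = (∏ i : Fin n, ∏ j ∈ Ioi i, (-1 : ℚ)) *
        ((n.factorial : ℚ) *
          (((n * (n + 1) / 2).factorial : ℚ) /
            ∏ i ∈ range n, ((2 * (i + 1) - 1).factorial : ℚ)) *
          ∏ i : Fin n, ∏ j ∈ Ioi i, ((2 * (j : ℕ) - 2 * (i : ℕ) : ℕ) : ℚ)) := by
        rw [Finset.sum_const, Finset.card_univ, Fintype.card_perm, Fintype.card_fin,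
          nsmul_eq_mul]
        ring

/-- Degree formula for the Lagrangian Grassmannian, as a polynomial identity: for `n ≥ 1`
the coefficient of `x_1^{2n-1}⋯x_n^{2n-1}` in
`(x_1 + ⋯ + x_n)^{n(n+1)/2} · ∏_{i≠j}(x_i - x_j) · ∏_{i<j}(x_i + x_j)` equals
`n! · ((n(n+1)/2)! / ∏_{i=1}^n (2i-1)!) · ∏_{1 ≤ i < j ≤ n}(2j - 2i)`. -/
theorem coeff_power_sum_mul_discriminant_eq_degree_LG (n : ℕ) (hn : 1 ≤ n) :
    MvPolynomial.coeff (Finsupp.equivFunOnFinite.symm fun _ : Fin n => 2 * n - 1)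
        ((∑ i : Fin n, MvPolynomial.X i) ^ (n * (n + 1) / 2) *
          (∏ p ∈ Finset.univ.offDiag, (MvPolynomial.X p.1 - MvPolynomial.X p.2)) *
          ∏ i : Fin n, ∏ j ∈ Ioi i,
            (MvPolynomial.X i + MvPolynomial.X j) : MvPolynomial (Fin n) ℚ)
      = (Nat.factorial n : ℚ) *
          ((Nat.factorial (n * (n + 1) / 2) : ℚ) /
            ∏ i ∈ Finset.range n, (Nat.factorial (2 * (i + 1) - 1) : ℚ)) *
          ∏ i : Fin n, ∏ j ∈ Ioi i, ((2 * (j : ℕ) - 2 * (i : ℕ) : ℕ) : ℚ) := by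
  have hε : (∏ i : Fin n, ∏ j ∈ Ioi i, (-1 : ℚ)) * (∏ i : Fin n, ∏ j ∈ Ioi i, (-1 : ℚ)) = 1 := by
    rw [← Finset.prod_mul_distrib]
    refine Finset.prod_eq_one fun i _ => ?_
    rw [← Finset.prod_mul_distrib]
    exact Finset.prod_eq_one fun j _ => by norm_num
  rw [mul_assoc, stepA n]
  rw [show ((∑ i : Fin n, X i) ^ (n * (n + 1) / 2) *
        (C (∏ i : Fin n, ∏ j ∈ Ioi i, (-1 : ℚ)) *
          ((Matrix.vandermonde fun i => (X i : MvPolynomial (Fin n) ℚ)).det *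
            (Matrix.vandermonde fun i => (X i : MvPolynomial (Fin n) ℚ) ^ 2).det))
        : MvPolynomial (Fin n) ℚ)
      = C (∏ i : Fin n, ∏ j ∈ Ioi i, (-1 : ℚ)) *
          ((∑ i : Fin n, X i) ^ (n * (n + 1) / 2) *
            ((Matrix.vandermonde fun i => (X i : MvPolynomial (Fin n) ℚ)).det *
              (Matrix.vandermonde fun i => (X i : MvPolynomial (Fin n) ℚ) ^ 2).det))
    from by ring]
  rw [MvPolynomial.coeff_C_mul]
  rw [Matrix.det_apply (Matrix.vandermonde fun i => (X i : MvPolynomial (Fin n) ℚ)),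
    Matrix.det_apply (Matrix.vandermonde fun i => (X i : MvPolynomial (Fin n) ℚ) ^ 2),
    Finset.sum_mul_sum, Finset.mul_sum]
  rw [MvPolynomial.coeff_sum]
  have hterm : ∀ σ ∈ (univ : Finset (Equiv.Perm (Fin n))),
      MvPolynomial.coeff (Finsupp.equivFunOnFinite.symm fun _ : Fin n => 2 * n - 1)
        ((∑ i : Fin n, X i) ^ (n * (n + 1) / 2) *
          ∑ τ : Equiv.Perm (Fin n),
            (Equiv.Perm.sign σ • ∏ i : Fin n,
                Matrix.vandermonde (fun i => (X i : MvPolynomial (Fin n) ℚ)) (σ i) i) *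
              (Equiv.Perm.sign τ • ∏ i : Fin n,
                Matrix.vandermonde (fun i => (X i : MvPolynomial (Fin n) ℚ) ^ 2) (τ i) i))
      = ∑ τ : Equiv.Perm (Fin n),
          ((Equiv.Perm.sign σ : ℤ) : ℚ) * ((Equiv.Perm.sign τ : ℤ) : ℚ) *
            (((n * (n + 1) / 2).factorial : ℚ) *
              (∏ i : Fin n, ((2 * n - 1 - 2 * (τ⁻¹ i : ℕ)).descFactorial (σ⁻¹ i : ℕ) : ℚ)) /
              ∏ i ∈ range n, ((2 * (i + 1) - 1).factorial : ℚ)) := by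
    intro σ _
    rw [Finset.mul_sum, MvPolynomial.coeff_sum]
    refine Finset.sum_congr rfl fun τ _ => ?_
    have ha : (∏ i : Fin n,
          Matrix.vandermonde (fun i => (X i : MvPolynomial (Fin n) ℚ)) (σ i) i)
        = monomial (Finsupp.equivFunOnFinite.symm fun i => ((σ⁻¹ i : Fin n) : ℕ)) (1 : ℚ) := by
      rw [← prod_X_pow_eq]
      rw [← Equiv.prod_comp σ
        (fun k => (X k : MvPolynomial (Fin n) ℚ) ^ ((σ⁻¹ k : Fin n) : ℕ))]
      refine Finset.prod_congr rfl fun i _ => ?_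
      rw [Matrix.vandermonde_apply, Equiv.Perm.inv_def, Equiv.symm_apply_apply]
    have hb : (∏ i : Fin n,
          Matrix.vandermonde (fun i => (X i : MvPolynomial (Fin n) ℚ) ^ 2) (τ i) i)
        = monomial (Finsupp.equivFunOnFinite.symm fun i => 2 * ((τ⁻¹ i : Fin n) : ℕ)) (1 : ℚ) := by
      rw [← prod_X_pow_eq]
      rw [← Equiv.prod_comp τ
        (fun k => (X k : MvPolynomial (Fin n) ℚ) ^ (2 * ((τ⁻¹ k : Fin n) : ℕ)))]
      refine Finset.prod_congr rfl fun i _ => ?_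
      rw [Matrix.vandermonde_apply, Equiv.Perm.inv_def, Equiv.symm_apply_apply, pow_mul]
    rw [ha, hb, smul_mul_assoc, mul_smul_comm, mul_smul_comm, mul_smul_comm,
      MvPolynomial.coeff_smul, MvPolynomial.coeff_smul, monomial_mul, mul_one]
    have he : (Finsupp.equivFunOnFinite.symm fun i => ((σ⁻¹ i : Fin n) : ℕ)) +
          (Finsupp.equivFunOnFinite.symm fun i => 2 * ((τ⁻¹ i : Fin n) : ℕ))
        = Finsupp.equivFunOnFinite.symm fun i => ((σ⁻¹ i : Fin n) : ℕ) + 2 * ((τ⁻¹ i : Fin n) : ℕ) := by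
      ext i
      simp
    rw [he, term_coeff n hn σ⁻¹ τ⁻¹, Units.smul_def, Units.smul_def, zsmul_eq_mul, zsmul_eq_mul]
    push_cast
    ring
  rw [Finset.sum_congr rfl hterm, sum_eval n, ← mul_assoc, hε, one_mul]
end
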